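/- For any real c and positive reals a and f, ∫₀^∞ ∫₀^{τ₃} ∫₀^{τ₃} (c/τ₃²) exp(-a τ₁) exp(-f τ₃) dτ₁ dτ₂ dτ₃ = (c/a)(log(a+f) - log f). -/

import Mathlib

open MeasureTheory Real Set Filter Topology

/-!
Integrating out τ₂ and τ₁ leaves, for each τ₃ > 0, the integrand
`(c / a) * (exp (-f τ₃) - exp (-(a + f) τ₃)) / τ₃`, whose integral over `(0, ∞)` is a Frullani
integral for `exp (-x)` equal to `(c / a) * log ((a + f) / f)`.
-/

theorem integral_exp_neg_mul {a : ℝ} (ha : a ≠ 0) (t : ℝ) :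
    ∫ x in (0 : ℝ)..t, exp (-a * x) = (1 - exp (-a * t)) / a := by
  rw [intervalIntegral.integral_comp_mul_left (fun x => exp x) (neg_ne_zero.2 ha), integral_exp,
    mul_zero, exp_zero, smul_eq_mul]
  field_simp
  ring

theorem integral_Ioo_exp_neg_mul {a t : ℝ} (ha : a ≠ 0) (ht : 0 ≤ t) :
    ∫ x in Ioo 0 t, exp (-a * x) = (1 - exp (-a * t)) / a := by
  rw [← integral_Ioc_eq_integral_Ioo, ← intervalIntegral.integral_of_le ht,
    integral_exp_neg_mul ha]

/-- `1 - e^{-y} ≤ y` gives `0 ≤ e^{-px} - e^{-qx} ≤ (q - p) x e^{-px}`. -/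
theorem norm_inv_mul_exp_neg_sub_le {p q x : ℝ} (hpq : p ≤ q) (hx : 0 < x) :
    ‖x⁻¹ * (exp (-(p * x)) - exp (-(q * x)))‖ ≤ (q - p) * exp (-p * x) := by
  have hsplit : exp (-(q * x)) = exp (-(p * x)) * exp (-((q - p) * x)) := by
    rw [← exp_add]; ring_nf
  have hlow : 1 - (q - p) * x ≤ exp (-((q - p) * x)) := one_sub_le_exp_neg _
  have hup : exp (-((q - p) * x)) ≤ 1 := exp_le_one_iff.2 (by nlinarith)
  have hpos := exp_pos (-(p * x))
  rw [hsplit, Real.norm_eq_abs, abs_of_nonneg (mul_nonneg (inv_nonneg.2 hx.le) (by nlinarith)),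
    neg_mul, inv_mul_le_iff₀ hx]
  nlinarith

theorem integrableOn_inv_mul_exp_neg_sub_of_le {p q : ℝ} (hp : 0 < p) (hpq : p ≤ q) :
    IntegrableOn (fun x => x⁻¹ * (exp (-(p * x)) - exp (-(q * x)))) (Ioi 0) := by
  refine ((exp_neg_integrableOn_Ioi 0 hp).const_mul (q - p)).mono'
    (Measurable.aestronglyMeasurable (by fun_prop)) (ae_restrict_of_forall_mem measurableSet_Ioi fun x hx => norm_inv_mul_exp_neg_sub_le hpq hx)

theorem integrableOn_inv_mul_exp_neg_sub {p q : ℝ} (hp : 0 < p) (hq : 0 < q) :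
    IntegrableOn (fun x => x⁻¹ * (exp (-(p * x)) - exp (-(q * x)))) (Ioi 0) := by
  rcases le_total p q with hpq | hqp
  · exact integrableOn_inv_mul_exp_neg_sub_of_le hp hpq
  · exact (integrableOn_inv_mul_exp_neg_sub_of_le hq hqp).neg.congr_fun (fun x _ => by simp only [Pi.neg_apply]; ring)
      measurableSet_Ioi

theorem integral_inv_mul_exp_neg_sub {p q : ℝ} (hp : 0 < p) (hq : 0 < q) :
    ∫ x in Ioi 0, x⁻¹ * (exp (-(p * x)) - exp (-(q * x))) = log (q / p) := by
  have hcont : Continuous fun x : ℝ => exp (-x) := by fun_prop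
  have hL : Tendsto (fun x : ℝ => exp (-x)) (𝓝[>] 0) (𝓝 1) := by
    simpa using (hcont.tendsto 0).mono_left nhdsWithin_le_nhds
  simpa using Frullani.integral_Ioi_eq (hcont.locallyIntegrable.locallyIntegrableOn _) hp hq hL
    tendsto_exp_neg_atTop_nhds_zero (integrableOn_inv_mul_exp_neg_sub hp hq)

theorem stmt_4 (c a f : ℝ) (ha : 0 < a) (hf : 0 < f) :
    ∫ τ₃ in Set.Ioi (0:ℝ), ∫ _τ₂ in Set.Ioo 0 τ₃, ∫ τ₁ in Set.Ioo 0 τ₃,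
      (c / τ₃^2) * Real.exp (-a * τ₁) * Real.exp (-f * τ₃)
      = (c / a) * (Real.log (a + f) - Real.log f) := by
  have inner (t : ℝ) (ht : 0 < t) :
      ∫ _ in Ioo 0 t, ∫ x in Ioo 0 t, c / t ^ 2 * exp (-a * x) * exp (-f * t)
        = c / a * (t⁻¹ * (exp (-(f * t)) - exp (-((a + f) * t)))) := by
    rw [setIntegral_const, integral_mul_const, integral_const_mul,
      integral_Ioo_exp_neg_mul ha.ne' ht.le, volume_real_Ioo_of_le ht.le, smul_eq_mul,
      show -((a + f) * t) = -a * t + -f * t by ring, exp_add]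
    field_simp
    ring
  calc _ = ∫ t in Ioi 0, c / a * (t⁻¹ * (exp (-(f * t)) - exp (-((a + f) * t)))) :=
        setIntegral_congr_fun measurableSet_Ioi inner
    _ = c / a * (log (a + f) - log f) := by
      rw [integral_const_mul, integral_inv_mul_exp_neg_sub hf (by positivity),
        log_div (by positivity) hf.ne']
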